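/- Every finite skew Boolean algebra embeds in a finite free skew Boolean algebra: for every finite skew Boolean algebra S there exist n ≥ 1, a skew Boolean algebra F freely generated by a set of n distinct elements, and an injective homomorphism S → F. -/

import Mathlib

universe u

/-- A skew Boolean algebra. -/
class SBA (S : Type u) where
  wedge : S → S → S
  vee : S → S → S
  diff : S → S → S
  zero : S
  wedge_assoc : ∀ x y z : S, wedge (wedge x y) z = wedge x (wedge y z)
  vee_assoc : ∀ x y z : S, vee (vee x y) z = vee x (vee y z)
  absorb1 : ∀ x y : S, wedge x (vee x y) = x
  absorb2 : ∀ x y : S, wedge (vee y x) x = x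
  absorb3 : ∀ x y : S, vee x (wedge x y) = x
  absorb4 : ∀ x y : S, vee (wedge y x) x = x
  sdistrib1 : ∀ x y z : S, wedge x (vee y z) = vee (wedge x y) (wedge x z)
  sdistrib2 : ∀ x y z : S, wedge (vee x y) z = vee (wedge x z) (wedge y z)
  zero_wedge : ∀ x : S, wedge zero x = zero
  wedge_zero : ∀ x : S, wedge x zero = zero
  zero_vee : ∀ x : S, vee zero x = x
  vee_zero : ∀ x : S, vee x zero = x
  diff_ax1 : ∀ x y : S, vee (wedge (wedge x y) x) (diff x y) = x
  diff_ax2 : ∀ x y : S, wedge (wedge (wedge x y) x) (diff x y) = zero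
  diff_ax3 : ∀ x y : S, wedge (diff x y) (wedge (wedge x y) x) = zero

namespace SBA

scoped infixl:70 " ⋏ " => SBA.wedge
scoped infixl:65 " ⋎ " => SBA.vee
scoped infixl:70 " ∖ " => SBA.diff

variable {S : Type u} [SBA S]

/-- Green's relation `D`: `x D y` iff `x⋏y⋏x = x` and `y⋏x⋏y = y`. -/
def Drel (x y : S) : Prop := x ⋏ y ⋏ x = x ∧ y ⋏ x ⋏ y = y

/-- The natural partial order: `x ≤ y` iff `x⋏y = x = y⋏x`. -/
def nle (x y : S) : Prop := x ⋏ y = x ∧ y ⋏ x = x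

/-- An atom: a nonzero element with nothing strictly between it and `0`. -/
def IsAtom (a : S) : Prop := a ≠ zero ∧ ∀ x : S, nle x a → x = zero ∨ x = a

/-- `X` generates `S`: the only subset of `S` containing `X` and `0` and closed
under the three operations is `S` itself. -/
def Generates (X : Set S) : Prop :=
  ∀ T : Set S, X ⊆ T → zero ∈ T →
    (∀ a b : S, a ∈ T → b ∈ T → a ⋏ b ∈ T ∧ a ⋎ b ∈ T ∧ a ∖ b ∈ T) →
    T = Set.univ

/-- A homomorphism of skew Boolean algebras. -/
def IsHom {T : Type u} [SBA T] (f : S → T) : Prop :=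
  (∀ a b : S, f (a ⋏ b) = f a ⋏ f b) ∧ (∀ a b : S, f (a ⋎ b) = f a ⋎ f b) ∧
    (∀ a b : S, f (a ∖ b) = f a ∖ f b) ∧ f zero = zero

end SBA

open SBA

/-- A left-handed skew Boolean algebra. -/
class LeftHanded (S : Type u) [SBA S] : Prop where
  lh_wedge : ∀ x y : S, x ⋏ y ⋏ x = x ⋏ y
  lh_vee : ∀ x y : S, x ⋎ y ⋎ x = y ⋎ x

/-- `S` is freely generated by `X` over the variety of all skew Boolean algebras. -/
def FreelyGenerates (S : Type u) [SBA S] (X : Set S) : Prop :=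
  Generates X ∧
    ∀ (T : Type u) [SBA T], ∀ g : X → T,
      ∃ f : S → T, IsHom f ∧ ∀ x : X, f x = g x

/-- `S` is freely generated by `X` over the variety of left-handed skew Boolean algebras. -/
def LFreelyGenerates (S : Type u) [SBA S] [LeftHanded S] (X : Set S) : Prop :=
  Generates X ∧
    ∀ (T : Type u) [SBA T] [LeftHanded T], ∀ g : X → T,
      ∃ f : S → T, IsHom f ∧ ∀ x : X, f x = g x


/-!
A finite skew Boolean algebra `S` is the join of its pairwise orthogonal components
`proj r s = s ⋏ r ⋏ s`, where `r` runs over representatives of the `D`-classes of atoms;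
each `proj r` is an endomorphism of `S` with values in `{0} ∪ D_r`, and the class `D_r` is a
rectangular band.

In the free algebra on the elements of `S`, let `μ_r = (⋀_{a D r} x_a) ∖ (⋁_{a not D r} x_a)`.
Sandwiching by `μ_r` absorbs every generator of the class of `r`, so
`b ↦ x_{b⋏r} ⋏ μ_r ⋏ x_{r⋏b}` is multiplicative on `D_r`; since minterms of distinct classes
are orthogonal, the join over `r` of these maps composed with `proj r` is a homomorphism.
Evaluating the generators as `a ↦ a` on the class of `r` and `a ↦ 0` elsewhere sends it back to
`proj r s`, which gives injectivity.
-/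

namespace SBA

variable {S : Type u} [SBA S]

/-! ### Basic identities -/

attribute [local simp] wedge_assoc zero_wedge wedge_zero zero_vee vee_zero

@[simp] theorem wedge_self (x : S) : x ⋏ x = x := by
  simpa only [absorb3] using absorb1 x (x ⋏ x)

@[simp] theorem wedge_wedge_self (x y : S) : x ⋏ (x ⋏ y) = x ⋏ y := by
  rw [← wedge_assoc, wedge_self]

@[simp] theorem wedge_pair_self (x y : S) : x ⋏ (y ⋏ (x ⋏ y)) = x ⋏ y := by
  rw [← wedge_assoc, wedge_self]

@[simp] theorem wedge_pair_self_assoc (x y z : S) :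
    x ⋏ (y ⋏ (x ⋏ (y ⋏ z))) = x ⋏ (y ⋏ z) := by
  simpa using wedge_wedge_self (x ⋏ y) z

theorem wedge_eq_zero_symm {x y : S} (h : x ⋏ y = zero) : y ⋏ x = zero := by
  rw [← wedge_self (y ⋏ x), wedge_assoc, ← wedge_assoc x, h]; simp

theorem wedge_wedge_eq_zero {x z : S} (h : x ⋏ z = zero) (y : S) : x ⋏ y ⋏ z = zero := by
  calc x ⋏ y ⋏ z = (x ⋏ y) ⋏ (z ⋏ x) ⋏ (y ⋏ z) := by
        rw [← wedge_self (x ⋏ y ⋏ z)]; simp only [wedge_assoc]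
    _ = zero := by rw [wedge_eq_zero_symm h]; simp

theorem sandwich_eq_zero_iff {r s : S} : r ⋏ s ⋏ r = zero ↔ s ⋏ r = zero := by
  refine ⟨fun h => ?_, fun h => by rw [wedge_assoc, h, wedge_zero]⟩
  calc s ⋏ r = s ⋏ (r ⋏ s ⋏ r) := by rw [← wedge_self (s ⋏ r)]; simp only [wedge_assoc]
    _ = zero := by rw [h, wedge_zero]

theorem wedge_diff (x y : S) : x ⋏ (x ∖ y) = x ∖ y :=
  calc x ⋏ (x ∖ y) = ((x ⋏ y ⋏ x) ⋎ (x ∖ y)) ⋏ (x ∖ y) := by rw [diff_ax1]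
    _ = x ∖ y := by rw [sdistrib2, diff_ax2, wedge_self, zero_vee]

theorem diff_wedge (x y : S) : (x ∖ y) ⋏ x = x ∖ y :=
  calc (x ∖ y) ⋏ x = (x ∖ y) ⋏ ((x ⋏ y ⋏ x) ⋎ (x ∖ y)) := by rw [diff_ax1]
    _ = x ∖ y := by rw [sdistrib1, diff_ax3, wedge_self, zero_vee]

theorem diff_wedge_eq_zero (x y : S) : (x ∖ y) ⋏ y = zero := by
  set d := x ∖ y
  have hdx : d ⋏ x = d := diff_wedge x y
  have hxd : x ⋏ d = d := wedge_diff x y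
  have hdyx : d ⋏ y ⋏ x = zero :=
    calc d ⋏ y ⋏ x = d ⋏ x ⋏ y ⋏ x := by rw [hdx]
      _ = zero := by rw [wedge_assoc d x y, wedge_assoc d]; exact diff_ax3 x y
  have hdyd : d ⋏ y ⋏ d = zero :=
    calc d ⋏ y ⋏ d = d ⋏ y ⋏ x ⋏ d := by rw [wedge_assoc (d ⋏ y) x, hxd]
      _ = zero := by rw [hdyx, zero_wedge]
  calc d ⋏ y = d ⋏ y ⋏ d ⋏ y := by rw [wedge_assoc (d ⋏ y) d y, wedge_self]
    _ = zero := by rw [hdyd, zero_wedge]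

theorem diff_unique {x y z : S} (h1 : x ⋏ z = z) (h2 : (x ⋏ y ⋏ x) ⋏ z = zero)
    (h3 : (x ⋏ y ⋏ x) ⋎ z = x) : z = x ∖ y := by
  have e1 : z = (x ∖ y) ⋏ z :=
    calc z = ((x ⋏ y ⋏ x) ⋎ (x ∖ y)) ⋏ z := by rw [diff_ax1, h1]
      _ = (x ∖ y) ⋏ z := by rw [sdistrib2, h2, zero_vee]
  have e2 : x ∖ y = (x ∖ y) ⋏ z :=
    calc x ∖ y = (x ∖ y) ⋏ ((x ⋏ y ⋏ x) ⋎ z) := by rw [h3, diff_wedge]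
      _ = (x ∖ y) ⋏ z := by rw [sdistrib1, diff_ax3, zero_vee]
  rw [e1, ← e2]

theorem diff_eq_zero_of_sandwich_eq {x y : S} (h : x ⋏ y ⋏ x = x) : x ∖ y = zero := by
  have := diff_ax2 x y
  rwa [h, wedge_diff] at this

@[simp] theorem diff_self (x : S) : x ∖ x = zero :=
  diff_eq_zero_of_sandwich_eq (by simp)

@[simp] theorem diff_zero (x : S) : x ∖ zero = x := by
  simpa using diff_ax1 x zero

@[simp] theorem zero_diff (x : S) : zero ∖ x = zero := by
  simpa using diff_ax1 zero x

/-! ### The natural partial order and Green's relation `D` -/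

theorem nle_refl (x : S) : nle x x := ⟨wedge_self x, wedge_self x⟩

theorem nle_trans {x y z : S} (hxy : nle x y) (hyz : nle y z) : nle x z :=
  ⟨by rw [← hxy.1, wedge_assoc, hyz.1], by rw [← hxy.2, ← wedge_assoc, hyz.2]⟩

theorem nle_antisymm {x y : S} (hxy : nle x y) (hyx : nle y x) : x = y := by
  rw [← hxy.1, hyx.2]

theorem zero_nle (x : S) : nle zero x := ⟨zero_wedge x, wedge_zero x⟩

theorem nle_diff (x y : S) : nle (x ∖ y) x := ⟨diff_wedge x y, wedge_diff x y⟩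

theorem nle_sandwich (e x : S) : nle (e ⋏ x ⋏ e) e := ⟨by simp, by simp⟩

theorem nle_wedge {u v e : S} (hu : nle u e) (hv : nle v e) : nle (u ⋏ v) e :=
  ⟨by rw [wedge_assoc, hv.1], by rw [← wedge_assoc, hu.2]⟩

theorem nle_vee {u v e : S} (hu : nle u e) (hv : nle v e) : nle (u ⋎ v) e :=
  ⟨by rw [sdistrib2, hu.1, hv.1], by rw [sdistrib1, hu.2, hv.2]⟩

theorem sandwich_eq_of_nle {b t : S} (h : nle b t) : t ⋏ b ⋏ t = b := by
  rw [h.2, h.1]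

theorem vee_diff_of_nle {b t : S} (h : nle b t) : b ⋎ (t ∖ b) = t := by
  simpa only [sandwich_eq_of_nle h] using diff_ax1 t b

theorem sandwich_eq_of_nle_of_sandwich_eq {d v w : S} (hdw : nle d w) (hv : w ⋏ v ⋏ w = w) :
    d ⋏ v ⋏ d = d := by
  calc d ⋏ v ⋏ d = d ⋏ w ⋏ v ⋏ (w ⋏ d) := by rw [hdw.1, hdw.2]
    _ = d ⋏ (w ⋏ v ⋏ w) ⋏ d := by simp only [wedge_assoc]
    _ = d := by rw [hv, hdw.1, wedge_self]

theorem wedge_comm_of_nle {u v e : S} (hu : nle u e) (hv : nle v e) : u ⋏ v = v ⋏ u := by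
  have hu' : u ⋏ (e ∖ u) = zero := by
    simpa only [sandwich_eq_of_nle hu] using diff_ax2 e u
  have huv : u ⋏ v = u ⋏ v ⋏ u := by
    conv_lhs => rw [← hv.1, ← vee_diff_of_nle hu]
    rw [sdistrib1, sdistrib1, ← wedge_assoc u v (e ∖ u), wedge_wedge_eq_zero hu' v, vee_zero,
      ← wedge_assoc]
  have hvu : v ⋏ u = u ⋏ v ⋏ u := by
    conv_lhs => rw [← hv.2, ← vee_diff_of_nle hu]
    rw [sdistrib2, sdistrib2, wedge_wedge_eq_zero (wedge_eq_zero_symm hu') v, vee_zero]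
  rw [huv, hvu]

theorem sandwich_wedge (e a b : S) :
    (e ⋏ a ⋏ e) ⋏ (e ⋏ b ⋏ e) = e ⋏ (a ⋏ b) ⋏ e := by
  set u := e ⋏ a ⋏ e
  set v := e ⋏ b ⋏ e
  set w := e ⋏ (a ⋏ b) ⋏ e
  set d := e ∖ (a ⋏ b)
  have huv : nle (u ⋏ v) e := nle_wedge (nle_sandwich e a) (nle_sandwich e b)
  have huvw : u ⋏ v ⋏ w = w := by
    rw [wedge_assoc, wedge_comm_of_nle (nle_sandwich e b) (nle_sandwich e _)]
    simp [u, w]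
  have hduv : d ⋏ (u ⋏ v) = zero := by
    have hde : ∀ x, d ⋏ (e ⋏ x) = d ⋏ x := fun x => by rw [← wedge_assoc, diff_wedge]
    have hdab : d ⋏ a ⋏ b = zero := by rw [wedge_assoc]; exact diff_wedge_eq_zero e _
    calc d ⋏ (u ⋏ v) = d ⋏ a ⋏ e ⋏ b ⋏ e := by simp [u, v, hde]
      _ = zero := by rw [wedge_wedge_eq_zero hdab e, zero_wedge]
  calc u ⋏ v = u ⋏ v ⋏ (w ⋎ d) := by rw [diff_ax1, huv.1]
    _ = w := by rw [sdistrib1, huvw, wedge_eq_zero_symm hduv, vee_zero]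

theorem sandwich_vee (e a b : S) : e ⋏ (a ⋎ b) ⋏ e = (e ⋏ a ⋏ e) ⋎ (e ⋏ b ⋏ e) := by
  rw [sdistrib1, sdistrib2]

theorem vee_comm_of_wedge_eq_zero {x y : S} (h : x ⋏ y = zero) : x ⋎ y = y ⋎ x := by
  have hyx := wedge_eq_zero_symm h
  have e1 : (x ⋎ y) ⋏ (y ⋎ x) = x ⋎ y := by
    rw [sdistrib2, absorb1, sdistrib1 x, h, zero_vee, wedge_self]
  have e2 : (x ⋎ y) ⋏ (y ⋎ x) = y ⋎ x := by
    rw [sdistrib1, absorb2, sdistrib2, hyx, vee_zero, wedge_self]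
  rw [← e1, e2]

theorem eq_of_wedge_eq_of_nle {u v e : S} (hu : nle u e) (hv : nle v e) (h : u ⋏ v = e) :
    u = e ∧ v = e := by
  have hu' : u = e := by rw [← hu.1, ← h, wedge_wedge_self]
  rw [hu'] at h
  exact ⟨hu', by rw [← hv.1, wedge_comm_of_nle hv (nle_refl e), h]⟩

theorem drel_refl (x : S) : Drel x x := ⟨by simp, by simp⟩

theorem drel_symm {x y : S} (h : Drel x y) : Drel y x := ⟨h.2, h.1⟩

theorem sandwich_eq_trans {x y z : S} (hxy : x ⋏ y ⋏ x = x) (hyz : y ⋏ z ⋏ y = y) :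
    x ⋏ z ⋏ x = x :=
  calc x ⋏ z ⋏ x = (x ⋏ y ⋏ x) ⋏ (x ⋏ z ⋏ x) ⋏ (x ⋏ y ⋏ x) := by rw [hxy]; simp
    _ = x ⋏ (y ⋏ z ⋏ y) ⋏ x := by rw [sandwich_wedge, sandwich_wedge]
    _ = x := by rw [hyz, hxy]

theorem drel_trans {x y z : S} (hxy : Drel x y) (hyz : Drel y z) : Drel x z :=
  ⟨sandwich_eq_trans hxy.1 hyz.1, sandwich_eq_trans hyz.2 hxy.2⟩

theorem drel_wedge {x y : S} (h : Drel x y) : Drel (x ⋏ y) x := by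
  constructor
  · calc x ⋏ y ⋏ x ⋏ (x ⋏ y) = x ⋏ (y ⋏ x ⋏ y) := by simp
      _ = x ⋏ y := by rw [h.2]
  · rw [wedge_wedge_self, h.1]

theorem eq_zero_of_drel_zero {y : S} (h : Drel zero y) : y = zero := by
  simpa using h.2.symm

theorem wedge_wedge_eq_of_drel {x y z : S} (hxy : Drel x y) (hyz : Drel y z) :
    x ⋏ y ⋏ z = x ⋏ z := by
  have hxyz : Drel x (y ⋏ z) := drel_trans hxy (drel_symm (drel_wedge hyz))
  calc x ⋏ y ⋏ z = x ⋏ (y ⋏ (z ⋏ x ⋏ z)) := by rw [(drel_trans hxy hyz).2, wedge_assoc]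
    _ = x ⋏ (y ⋏ z) ⋏ x ⋏ z := by simp
    _ = x ⋏ z := by rw [hxyz.1]

theorem wedge_eq_zero_of_drel {d b x : S} (h : d ⋏ b = zero) (hx : Drel x b) :
    d ⋏ x = zero := by
  rw [← hx.1, ← wedge_assoc, ← wedge_assoc, wedge_wedge_eq_zero h, zero_wedge]

theorem wedge_eq_of_nle_of_drel {b t x : S} (hbt : nle b t) (hx : Drel x b) :
    t ⋏ x = b ⋏ x ∧ x ⋏ t = x ⋏ b := by
  have hdx : (t ∖ b) ⋏ x = zero := wedge_eq_zero_of_drel (diff_wedge_eq_zero t b) hx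
  rw [← vee_diff_of_nle hbt, sdistrib2, sdistrib1, hdx, wedge_eq_zero_symm hdx]
  simp

theorem vee_eq_wedge_of_drel {p q : S} (h : Drel p q) : p ⋎ q = q ⋏ p := by
  have hz : nle (q ⋏ p) (p ⋎ q) :=
    ⟨by rw [wedge_assoc, absorb1], by rw [← wedge_assoc, absorb2]⟩
  have hd : ((p ⋎ q) ∖ (q ⋏ p)) ⋏ (q ⋏ p) = zero := diff_wedge_eq_zero _ _
  have hqz : Drel q (q ⋏ p) := drel_symm (drel_wedge (drel_symm h))
  have hdp : ((p ⋎ q) ∖ (q ⋏ p)) ⋏ p = zero :=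
    wedge_eq_zero_of_drel hd (drel_trans h hqz)
  have hdq : ((p ⋎ q) ∖ (q ⋏ p)) ⋏ q = zero := wedge_eq_zero_of_drel hd hqz
  have hd0 : (p ⋎ q) ∖ (q ⋏ p) = zero := by
    rw [← diff_wedge, sdistrib1, hdp, hdq, vee_zero]
  rw [← vee_diff_of_nle hz, hd0, vee_zero]

/-! ### Finite joins and meets, homomorphisms -/

theorem eq_zero_of_vee_eq_zero {u v : S} (h : u ⋎ v = zero) : u = zero ∧ v = zero :=
  ⟨by simpa [h] using (absorb1 u v).symm, by simpa [h] using (absorb2 v u).symm⟩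

def joinList : List S → S
  | [] => zero
  | a :: l => a ⋎ joinList l

@[simp] theorem joinList_nil : joinList ([] : List S) = zero := rfl

@[simp] theorem joinList_cons (a : S) (l : List S) : joinList (a :: l) = a ⋎ joinList l := rfl

theorem joinList_eq_zero_iff {l : List S} : joinList l = zero ↔ ∀ b ∈ l, b = zero := by
  induction l with
  | nil => simp
  | cons a l ih =>
    refine ⟨fun h => ?_, fun h => ?_⟩
    · obtain ⟨ha, hl⟩ := eq_zero_of_vee_eq_zero h
      simpa [ha] using ih.1 hl
    · simp [h a (by simp), ih.2 fun b hb => h b (by simp [hb])]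

theorem wedge_joinList_eq_zero {x : S} {l : List S} (h : ∀ b ∈ l, x ⋏ b = zero) :
    x ⋏ joinList l = zero := by
  induction l with
  | nil => simp
  | cons a l ih =>
    rw [joinList_cons, sdistrib1, h a (by simp), ih fun b hb => h b (by simp [hb]), vee_zero]

theorem nle_joinList {e : S} {l : List S} (h : ∀ b ∈ l, nle b e) : nle (joinList l) e := by
  induction l with
  | nil => exact zero_nle e
  | cons a l ih => exact nle_vee (h a (by simp)) (ih fun b hb => h b (by simp [hb]))

theorem joinList_map_eq_single {β : Type*} {l : List β} {f : β → S} {c : β} (hl : l.Nodup)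
    (hc : c ∈ l) (h : ∀ c' ∈ l, c' ≠ c → f c' = zero) : joinList (l.map f) = f c := by
  induction l with
  | nil => cases hc
  | cons d l ih =>
    obtain ⟨hdl, hl⟩ := List.nodup_cons.1 hl
    rw [List.map_cons, joinList_cons]
    rcases List.mem_cons.1 hc with rfl | hc
    · rw [joinList_eq_zero_iff.2, vee_zero]
      simp only [List.mem_map]
      rintro _ ⟨c', hc', rfl⟩
      exact h c' (by simp [hc']) (by rintro rfl; exact hdl hc')
    · rw [h d (by simp) (by rintro rfl; exact hdl hc), zero_vee]
      exact ih hl hc fun c' hc' => h c' (by simp [hc'])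

def meetList (a : S) (l : List S) : S := l.foldl (· ⋏ ·) a

@[simp] theorem meetList_nil (a : S) : meetList a [] = a := rfl

@[simp] theorem meetList_cons (a b : S) (l : List S) :
    meetList a (b :: l) = meetList (a ⋏ b) l := rfl

theorem zero_meetList (l : List S) : meetList zero l = zero := by
  induction l with
  | nil => rfl
  | cons b l ih => rwa [meetList_cons, zero_wedge]

theorem drel_meetList {r a : S} {l : List S} (ha : Drel a r) (hl : ∀ b ∈ l, Drel b r) :
    Drel (meetList a l) r := by
  induction l generalizing a with
  | nil => exact ha
  | cons b l ih =>
    exact ih (drel_trans (drel_wedge (drel_trans ha (drel_symm (hl b (by simp))))) ha)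
      fun c hc => hl c (by simp [hc])

theorem eq_of_meetList_eq {e a : S} {l : List S} (ha : nle a e) (hl : ∀ v ∈ l, nle v e)
    (h : meetList a l = e) : a = e ∧ ∀ v ∈ l, v = e := by
  induction l generalizing a with
  | nil => exact ⟨h, by simp⟩
  | cons b l ih =>
    have hb := hl b (by simp)
    obtain ⟨hab, hl'⟩ := ih (nle_wedge ha hb) (fun v hv => hl v (by simp [hv])) h
    obtain ⟨ha', hb'⟩ := eq_of_wedge_eq_of_nle ha hb hab
    refine ⟨ha', fun v hv => ?_⟩
    rcases List.mem_cons.1 hv with rfl | hv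
    exacts [hb', hl' v hv]

section Hom

variable {T : Type u} [SBA T] {f : S → T}

theorem IsHom.map_wedge (hf : IsHom f) (a b : S) : f (a ⋏ b) = f a ⋏ f b := hf.1 a b

theorem IsHom.map_vee (hf : IsHom f) (a b : S) : f (a ⋎ b) = f a ⋎ f b := hf.2.1 a b

theorem IsHom.map_diff (hf : IsHom f) (a b : S) : f (a ∖ b) = f a ∖ f b := hf.2.2.1 a b

theorem IsHom.map_zero (hf : IsHom f) : f zero = zero := hf.2.2.2

theorem isHom_of_map_wedge_vee (hw : ∀ a b, f (a ⋏ b) = f a ⋏ f b)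
    (hv : ∀ a b, f (a ⋎ b) = f a ⋎ f b) (h0 : f zero = zero) : IsHom f := by
  refine ⟨hw, hv, fun a b => diff_unique ?_ ?_ ?_, h0⟩
  · rw [← hw, wedge_diff]
  · rw [← hw, ← hw, ← hw, diff_ax2, h0]
  · rw [← hw, ← hw, ← hv, diff_ax1]

theorem isHom_sandwich (e : S) : IsHom fun x => e ⋏ x ⋏ e :=
  isHom_of_map_wedge_vee (fun a b => (sandwich_wedge e a b).symm) (sandwich_vee e)
    (by simp)

theorem IsHom.map_joinList (hf : IsHom f) (l : List S) :
    f (joinList l) = joinList (l.map f) := by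
  induction l with
  | nil => exact hf.map_zero
  | cons a l ih => rw [joinList_cons, hf.map_vee, ih, List.map_cons, joinList_cons]

theorem IsHom.map_meetList (hf : IsHom f) (a : S) (l : List S) :
    f (meetList a l) = meetList (f a) (l.map f) := by
  induction l generalizing a with
  | nil => rfl
  | cons b l ih => rw [meetList_cons, ih, hf.map_wedge, List.map_cons, meetList_cons]

theorem IsHom.vee_of_wedge_eq_zero {g : S → T} (hf : IsHom f) (hg : IsHom g)
    (horth : ∀ u v, f u ⋏ g v = zero) : IsHom fun s => f s ⋎ g s := by
  refine isHom_of_map_wedge_vee (fun a b => ?_) (fun a b => ?_) (by simp [hf.map_zero, hg.map_zero])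
  · rw [sdistrib2, sdistrib1, sdistrib1, horth, wedge_eq_zero_symm (horth b a), vee_zero,
      zero_vee, hf.map_wedge, hg.map_wedge]
  · simp only [hf.map_vee, hg.map_vee, vee_assoc]
    rw [← vee_assoc (f b), vee_comm_of_wedge_eq_zero (horth b a), vee_assoc]

theorem isHom_joinList_map {β : Type*} {η : β → S → T} {l : List β}
    (hη : ∀ i ∈ l, IsHom (η i)) (horth : l.Pairwise fun i j => ∀ u v, η i u ⋏ η j v = zero) :
    IsHom fun s => joinList (l.map fun i => η i s) := by
  induction l with
  | nil => exact isHom_of_map_wedge_vee (by simp) (by simp) rfl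
  | cons i l ih =>
    obtain ⟨hi, hl⟩ := List.pairwise_cons.1 horth
    simp only [List.map_cons, joinList_cons]
    exact (hη i (by simp)).vee_of_wedge_eq_zero (ih (fun j hj => hη j (by simp [hj])) hl)
      fun u v => wedge_joinList_eq_zero (by simpa using fun j hj => hi j hj u v)

theorem IsHom.comp_of_drel {p : S → S} {γ : S → T} {r : S} (hp : IsHom p)
    (hpr : ∀ s, p s = zero ∨ Drel (p s) r) (hγ0 : γ zero = zero)
    (hγ : ∀ b b', Drel b r → Drel b' r → γ (b ⋏ b') = γ b ⋏ γ b') :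
    IsHom fun s => γ (p s) := by
  have hsand : ∀ b b', Drel b r → Drel b' r → γ b ⋏ γ b' ⋏ γ b = γ b := fun b b' hb hb' => by
    have hbb' := drel_trans hb (drel_symm hb')
    rw [← hγ b b' hb hb', ← hγ _ _ (drel_trans (drel_wedge hbb') hb) hb, hbb'.1]
  refine isHom_of_map_wedge_vee (fun a b => ?_) (fun a b => ?_) (by simp [hp.map_zero, hγ0])
  · rw [hp.map_wedge]
    rcases hpr a with ha | ha
    · simp [ha, hγ0]
    rcases hpr b with hb | hb
    · simp [hb, hγ0]
    exact hγ _ _ ha hb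
  · rw [hp.map_vee]
    rcases hpr a with ha | ha
    · simp [ha, hγ0]
    rcases hpr b with hb | hb
    · simp [hb, hγ0]
    rw [vee_eq_wedge_of_drel (drel_trans ha (drel_symm hb)), hγ _ _ hb ha,
      vee_eq_wedge_of_drel ⟨hsand _ _ ha hb, hsand _ _ hb ha⟩]

end Hom

theorem sandwich_meetList_of_mem {a v : S} {l : List S} (hv : v ∈ l) :
    meetList a l ⋏ v ⋏ meetList a l = meetList a l := by
  set W := meetList a l
  have hW : meetList (W ⋏ a ⋏ W) (l.map fun x => W ⋏ x ⋏ W) = W := by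
    rw [← (isHom_sandwich W).map_meetList]
    show W ⋏ W ⋏ W = W
    simp
  exact (eq_of_meetList_eq (nle_sandwich W a) (by simpa using fun x _ => nle_sandwich W x)
    hW).2 _ (List.mem_map.2 ⟨v, hv, rfl⟩)

theorem wedge_eq_zero_of_wedge_joinList_eq_zero {d v : S} {l : List S}
    (h : d ⋏ joinList l = zero) (hv : v ∈ l) : d ⋏ v = zero := by
  have hsand : joinList (l.map fun x => d ⋏ x ⋏ d) = zero := by
    rw [← (isHom_sandwich d).map_joinList, h, zero_wedge]
  have hdvd := joinList_eq_zero_iff.1 hsand _ (List.mem_map.2 ⟨v, hv, rfl⟩)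
  exact wedge_eq_zero_symm (sandwich_eq_zero_iff.1 hdvd)

/-! ### Atoms and the decomposition into components -/

theorem IsAtom.sandwich_eq_zero_or_eq {r : S} (hr : IsAtom r) (s : S) :
    r ⋏ s ⋏ r = zero ∨ r ⋏ s ⋏ r = r :=
  hr.2 _ (nle_sandwich r s)

theorem IsAtom.wedge_eq_zero_or_drel {r r' : S} (hr : IsAtom r) (hr' : IsAtom r') :
    r ⋏ r' = zero ∨ Drel r r' := by
  rcases hr.sandwich_eq_zero_or_eq r' with h | h
  · exact Or.inl (wedge_eq_zero_symm (sandwich_eq_zero_iff.1 h))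
  rcases hr'.sandwich_eq_zero_or_eq r with h' | h'
  · exact Or.inl (sandwich_eq_zero_iff.1 h')
  · exact Or.inr ⟨h, h'⟩

/-- For an atom `r`, the component of `s` in the `D`-class of `r`: either `0` or the unique
element of that class below `s`. -/
def proj (r s : S) : S := s ⋏ r ⋏ s

theorem nle_proj (r s : S) : nle (proj r s) s := ⟨by simp [proj], by simp [proj]⟩

@[simp] theorem proj_zero (r : S) : proj r zero = zero := by simp [proj]

theorem proj_eq_zero_iff {r s : S} : proj r s = zero ↔ s ⋏ r = zero :=
  sandwich_eq_zero_iff.trans ⟨wedge_eq_zero_symm, wedge_eq_zero_symm⟩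

theorem drel_proj {r s : S} (h : r ⋏ s ⋏ r = r) : Drel (proj r s) r := by
  have h' : ∀ x, r ⋏ (s ⋏ (r ⋏ x)) = r ⋏ x := fun x => by
    rw [← wedge_assoc s, ← wedge_assoc, ← wedge_assoc r s r, h]
  have h'' : r ⋏ (s ⋏ r) = r := by rw [← wedge_assoc, h]
  exact ⟨by simp [proj, h'], by simp [proj, h', h'']⟩

theorem IsAtom.proj_eq_zero_or_drel {r : S} (hr : IsAtom r) (s : S) :
    proj r s = zero ∨ Drel (proj r s) r :=
  (hr.sandwich_eq_zero_or_eq s).imp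
    (fun h => proj_eq_zero_iff.2 (sandwich_eq_zero_iff.1 h)) drel_proj

theorem proj_eq_of_nle {b r t : S} (hbt : nle b t) (hb : Drel b r) : proj r t = b := by
  obtain ⟨htr, hrt⟩ := wedge_eq_of_nle_of_drel hbt (drel_symm hb)
  rw [proj, htr, wedge_assoc, hrt, ← wedge_assoc, hb.1]

theorem proj_wedge_of_drel {r s t : S} (hs : Drel (proj r s) r) (ht : Drel (proj r t) r) :
    proj r (s ⋏ t) = proj r s ⋏ proj r t := by
  set A := proj r s
  set B := proj r t
  have hAB : Drel A B := drel_trans hs (drel_symm ht)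
  have htr : ∀ x, t ⋏ (r ⋏ x) = B ⋏ (r ⋏ x) := fun x => by
    rw [← wedge_assoc, (wedge_eq_of_nle_of_drel (nle_proj r t) (drel_symm ht)).1, wedge_assoc]
  have hrs : ∀ x, r ⋏ (s ⋏ x) = r ⋏ (A ⋏ x) := fun x => by
    rw [← wedge_assoc, (wedge_eq_of_nle_of_drel (nle_proj r s) (drel_symm hs)).2, wedge_assoc]
  have hsB : ∀ x, s ⋏ (B ⋏ x) = A ⋏ (B ⋏ x) := fun x => by
    rw [← wedge_assoc, (wedge_eq_of_nle_of_drel (nle_proj r s) (drel_symm hAB)).1, wedge_assoc]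
  have hAt : A ⋏ t = A ⋏ B := (wedge_eq_of_nle_of_drel (nle_proj r t) hAB).2
  have hABr : ∀ x, A ⋏ (B ⋏ (r ⋏ x)) = A ⋏ (r ⋏ x) := fun x => by
    rw [← wedge_assoc B, ← wedge_assoc, ← wedge_assoc A B r, wedge_wedge_eq_of_drel hAB ht,
      wedge_assoc]
  have hArA : A ⋏ (r ⋏ (A ⋏ B)) = A ⋏ B := by rw [← wedge_assoc, ← wedge_assoc, hs.1]
  calc proj r (s ⋏ t) = s ⋏ (t ⋏ (r ⋏ (s ⋏ t))) := by simp only [proj, wedge_assoc]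
    _ = A ⋏ B := by rw [htr, hrs, hAt, hsB, hABr, hArA]

theorem proj_wedge {r : S} (hr : IsAtom r) (s t : S) :
    proj r (s ⋏ t) = proj r s ⋏ proj r t := by
  rcases hr.proj_eq_zero_or_drel s with hs | hs
  · rw [hs, zero_wedge, proj_eq_zero_iff, wedge_wedge_eq_zero (proj_eq_zero_iff.1 hs)]
  rcases hr.proj_eq_zero_or_drel t with ht | ht
  · rw [ht, wedge_zero, proj_eq_zero_iff, wedge_assoc, proj_eq_zero_iff.1 ht, wedge_zero]
  exact proj_wedge_of_drel hs ht

theorem proj_vee_of_drel {r s t : S} (hs : Drel (proj r s) r) (ht : Drel (proj r t) r) :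
    proj r (s ⋎ t) = proj r s ⋎ proj r t := by
  set A := proj r s
  set B := proj r t
  have hAB : Drel A B := drel_trans hs (drel_symm ht)
  obtain ⟨hsr, hrs⟩ := wedge_eq_of_nle_of_drel (nle_proj r s) (drel_symm hs)
  obtain ⟨htr, hrt⟩ := wedge_eq_of_nle_of_drel (nle_proj r t) (drel_symm ht)
  have hArBr : Drel (A ⋏ r) (B ⋏ r) :=
    drel_trans (drel_wedge hs) (drel_trans hAB (drel_symm (drel_wedge ht)))
  have hL : (s ⋎ t) ⋏ r = B ⋏ r := by
    rw [sdistrib2, hsr, htr, vee_eq_wedge_of_drel hArBr, ← wedge_assoc,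
      wedge_wedge_eq_of_drel ht (drel_symm hs), wedge_wedge_eq_of_drel (drel_symm hAB) hs]
  calc proj r (s ⋎ t) = B ⋏ r ⋏ (s ⋎ t) := by rw [proj, hL]
    _ = B ⋏ A ⋎ B := by
      rw [sdistrib1, wedge_assoc, wedge_assoc, hrs, hrt, ← wedge_assoc, ← wedge_assoc,
        wedge_wedge_eq_of_drel ht (drel_symm hs), ht.1]
    _ = A ⋎ B := by
      rw [vee_eq_wedge_of_drel (drel_wedge (drel_symm hAB)), wedge_wedge_self,
        vee_eq_wedge_of_drel hAB]

theorem proj_vee {r : S} (hr : IsAtom r) (s t : S) :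
    proj r (s ⋎ t) = proj r s ⋎ proj r t := by
  rcases hr.proj_eq_zero_or_drel t with ht | ht
  · have htr := proj_eq_zero_iff.1 ht
    rw [ht, vee_zero]
    unfold proj
    rw [sdistrib2, htr, vee_zero, sdistrib1, wedge_assoc s r t, wedge_eq_zero_symm htr,
      wedge_zero, vee_zero]
  rcases hr.proj_eq_zero_or_drel s with hs | hs
  · have hsr := proj_eq_zero_iff.1 hs
    rw [hs, zero_vee]
    unfold proj
    rw [sdistrib2, hsr, zero_vee, sdistrib1, wedge_assoc t r s, wedge_eq_zero_symm hsr,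
      wedge_zero, zero_vee]
  exact proj_vee_of_drel hs ht

theorem isHom_proj {r : S} (hr : IsAtom r) : IsHom (proj r) :=
  isHom_of_map_wedge_vee (proj_wedge hr) (proj_vee hr) (proj_zero r)

theorem proj_proj {r : S} (hr : IsAtom r) (s : S) : proj r (proj r s) = proj r s := by
  rcases hr.proj_eq_zero_or_drel s with h | h
  · rw [h, proj_zero]
  · exact proj_eq_of_nle (nle_refl _) h

theorem proj_proj_of_wedge_eq_zero {r r' : S} (hr' : IsAtom r') (h : r ⋏ r' = zero) (s : S) :
    proj r (proj r' s) = zero := by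
  rcases hr'.proj_eq_zero_or_drel s with hs | hs
  · rw [hs, proj_zero]
  · exact proj_eq_zero_iff.2 (wedge_eq_zero_symm (wedge_eq_zero_of_drel h hs))

theorem exists_isAtom_nle [Finite S] {s : S} (hs : s ≠ zero) : ∃ a, IsAtom a ∧ nle a s := by
  let _ : PartialOrder S :=
    { le := nle, le_refl := nle_refl, le_trans := fun _ _ _ => nle_trans,
      le_antisymm := fun _ _ => nle_antisymm }
  let _ : OrderBot S := { bot := zero, bot_le := zero_nle }
  obtain ⟨a, ha, has⟩ := (eq_bot_or_exists_atom_le s).resolve_left hs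
  refine ⟨a, ⟨ha.1, fun x hx => ?_⟩, has⟩
  rcases eq_or_ne x a with h | h
  · exact Or.inr h
  · exact Or.inl (ha.2 x (lt_of_le_of_ne hx h))

structure IsAtomTransversal (R : List S) : Prop where
  isAtom : ∀ r ∈ R, IsAtom r
  nodup : R.Nodup
  eq_of_drel : ∀ r ∈ R, ∀ r' ∈ R, Drel r r' → r = r'
  exists_drel : ∀ a, IsAtom a → ∃ r ∈ R, Drel a r

theorem exists_isAtomTransversal [Finite S] : ∃ R : List S, IsAtomTransversal R := by
  let D : Setoid {a : S // IsAtom a} :=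
    ⟨fun a b => Drel a.1 b.1, ⟨fun _ => drel_refl _, drel_symm, drel_trans⟩⟩
  let rep : {a : S // IsAtom a} → S := fun a => (Quotient.mk D a).out.1
  have hrep : ∀ a, Drel (rep a) a.1 := fun a => Quotient.mk_out (s := D) a
  refine ⟨(Set.toFinite (Set.range rep)).toFinset.toList, ⟨?_, Finset.nodup_toList _, ?_, ?_⟩⟩
  · simp only [Finset.mem_toList, Set.Finite.mem_toFinset, Set.mem_range]
    rintro _ ⟨a, rfl⟩
    exact (Quotient.mk D a).out.2
  · simp only [Finset.mem_toList, Set.Finite.mem_toFinset, Set.mem_range]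
    rintro _ ⟨a, rfl⟩ _ ⟨b, rfl⟩ h
    have hab : D a b := drel_trans (drel_symm (hrep a)) (drel_trans h (hrep b))
    exact congrArg (fun c => c.out.1) (Quotient.sound hab)
  · intro a ha
    exact ⟨rep ⟨a, ha⟩, by simp, drel_symm (hrep ⟨a, ha⟩)⟩

namespace IsAtomTransversal

theorem wedge_eq_zero {R : List S} (hR : IsAtomTransversal R) {r r' : S} (hr : r ∈ R)
    (hr' : r' ∈ R) (hne : r ≠ r') : r ⋏ r' = zero :=
  ((hR.isAtom r hr).wedge_eq_zero_or_drel (hR.isAtom r' hr')).resolve_right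
    fun h => hne (hR.eq_of_drel r hr r' hr' h)

theorem eq_zero_of_forall_proj_eq_zero [Finite S] {R : List S} (hR : IsAtomTransversal R)
    {d : S} (h : ∀ r ∈ R, proj r d = zero) : d = zero := by
  by_contra hd
  obtain ⟨a, ha, had⟩ := exists_isAtom_nle hd
  obtain ⟨r, hr, har⟩ := hR.exists_drel a ha
  exact ha.1 ((proj_eq_of_nle had har).symm.trans (h r hr))

theorem joinList_proj [Finite S] {R : List S} (hR : IsAtomTransversal R) (s : S) :
    joinList (R.map fun r => proj r s) = s := by
  set J := joinList (R.map fun r => proj r s)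
  have hJs : nle J s := nle_joinList (by simpa using fun r _ => nle_proj r s)
  have hprojJ : ∀ r ∈ R, proj r J = proj r s := fun r hr => by
    rw [(isHom_proj (hR.isAtom r hr)).map_joinList, List.map_map]
    refine (joinList_map_eq_single hR.nodup hr fun r' hr' hne => ?_).trans
      (proj_proj (hR.isAtom r hr) s)
    exact proj_proj_of_wedge_eq_zero (hR.isAtom r' hr') (hR.wedge_eq_zero hr hr' hne.symm) s
  have hdiff : s ∖ J = zero := hR.eq_zero_of_forall_proj_eq_zero fun r hr => by
    rw [(isHom_proj (hR.isAtom r hr)).map_diff, hprojJ r hr, diff_self]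
  rw [← vee_diff_of_nle hJs, hdiff, vee_zero]

end IsAtomTransversal

/-! ### Free skew Boolean algebras -/

abbrev ofGeneralizedBooleanAlgebra (α : Type u) [GeneralizedBooleanAlgebra α] : SBA α where
  wedge := (· ⊓ ·)
  vee := (· ⊔ ·)
  diff := (· \ ·)
  zero := ⊥
  wedge_assoc := inf_assoc
  vee_assoc := sup_assoc
  absorb1 _ _ := inf_sup_self
  absorb2 _ _ := by simp
  absorb3 _ _ := sup_inf_self
  absorb4 _ _ := by simp
  sdistrib1 := inf_sup_left
  sdistrib2 := inf_sup_right
  zero_wedge := bot_inf_eq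
  wedge_zero := inf_bot_eq
  zero_vee := bot_sup_eq
  vee_zero := sup_bot_eq
  diff_ax1 x y := by simp only [inf_right_comm, inf_idem]; exact sup_inf_sdiff x y
  diff_ax2 x y := by simp only [inf_right_comm, inf_idem]; exact inf_inf_sdiff x y
  diff_ax3 x y := by simp only [inf_right_comm, inf_idem]; rw [inf_comm]; exact inf_inf_sdiff x y

end SBA

inductive FreeSBA.Term (α : Type u) : Type u
  | of : α → Term α
  | zero : Term α
  | wedge : Term α → Term α → Term α
  | vee : Term α → Term α → Term α
  | diff : Term α → Term α → Term α

namespace FreeSBA.Term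

variable {α : Type u}

def eval {T : Type u} [SBA T] (env : α → T) : Term α → T
  | of a => env a
  | Term.zero => SBA.zero
  | wedge a b => eval env a ⋏ eval env b
  | vee a b => eval env a ⋎ eval env b
  | diff a b => eval env a ∖ eval env b

instance setoid (α : Type u) : Setoid (Term α) where
  r t s := ∀ (T : Type u) [SBA T] (env : α → T), eval env t = eval env s
  iseqv := ⟨fun _ _ _ _ => rfl, fun h T _ env => (h T env).symm,
    fun h₁ h₂ T _ env => (h₁ T env).trans (h₂ T env)⟩

end FreeSBA.Term

def FreeSBA (α : Type u) : Type u := Quotient (FreeSBA.Term.setoid α)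

namespace FreeSBA

open Term

variable {α : Type u}

instance : SBA (FreeSBA α) where
  wedge := Quotient.map₂ Term.wedge fun _ _ ha _ _ hb T _ env =>
    congrArg₂ (· ⋏ ·) (ha T env) (hb T env)
  vee := Quotient.map₂ Term.vee fun _ _ ha _ _ hb T _ env =>
    congrArg₂ (· ⋎ ·) (ha T env) (hb T env)
  diff := Quotient.map₂ Term.diff fun _ _ ha _ _ hb T _ env =>
    congrArg₂ (· ∖ ·) (ha T env) (hb T env)
  zero := ⟦Term.zero⟧
  wedge_assoc := by rintro ⟨a⟩ ⟨b⟩ ⟨c⟩; exact Quotient.sound fun T _ _ => wedge_assoc _ _ _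
  vee_assoc := by rintro ⟨a⟩ ⟨b⟩ ⟨c⟩; exact Quotient.sound fun T _ _ => vee_assoc _ _ _
  absorb1 := by rintro ⟨a⟩ ⟨b⟩; exact Quotient.sound fun T _ _ => absorb1 _ _
  absorb2 := by rintro ⟨a⟩ ⟨b⟩; exact Quotient.sound fun T _ _ => absorb2 _ _
  absorb3 := by rintro ⟨a⟩ ⟨b⟩; exact Quotient.sound fun T _ _ => absorb3 _ _
  absorb4 := by rintro ⟨a⟩ ⟨b⟩; exact Quotient.sound fun T _ _ => absorb4 _ _
  sdistrib1 := by rintro ⟨a⟩ ⟨b⟩ ⟨c⟩; exact Quotient.sound fun T _ _ => sdistrib1 _ _ _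
  sdistrib2 := by rintro ⟨a⟩ ⟨b⟩ ⟨c⟩; exact Quotient.sound fun T _ _ => sdistrib2 _ _ _
  zero_wedge := by rintro ⟨a⟩; exact Quotient.sound fun T _ _ => zero_wedge _
  wedge_zero := by rintro ⟨a⟩; exact Quotient.sound fun T _ _ => wedge_zero _
  zero_vee := by rintro ⟨a⟩; exact Quotient.sound fun T _ _ => zero_vee _
  vee_zero := by rintro ⟨a⟩; exact Quotient.sound fun T _ _ => vee_zero _
  diff_ax1 := by rintro ⟨a⟩ ⟨b⟩; exact Quotient.sound fun T _ _ => diff_ax1 _ _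
  diff_ax2 := by rintro ⟨a⟩ ⟨b⟩; exact Quotient.sound fun T _ _ => diff_ax2 _ _
  diff_ax3 := by rintro ⟨a⟩ ⟨b⟩; exact Quotient.sound fun T _ _ => diff_ax3 _ _

def of (a : α) : FreeSBA α := ⟦Term.of a⟧

def lift {T : Type u} [SBA T] (env : α → T) : FreeSBA α → T :=
  Quotient.lift (eval env) fun _ _ h => h T env

@[simp] theorem lift_of {T : Type u} [SBA T] (env : α → T) (a : α) : lift env (of a) = env a :=
  rfl

theorem isHom_lift {T : Type u} [SBA T] (env : α → T) : IsHom (lift env) :=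
  ⟨by rintro ⟨a⟩ ⟨b⟩; rfl, by rintro ⟨a⟩ ⟨b⟩; rfl, by rintro ⟨a⟩ ⟨b⟩; rfl, rfl⟩

theorem generates_range_of : Generates (Set.range (of : α → FreeSBA α)) := by
  intro X hof hzero hclosed
  refine Set.eq_univ_of_forall fun w => Quotient.inductionOn w fun t => ?_
  induction t with
  | of a => exact hof ⟨a, rfl⟩
  | zero => exact hzero
  | wedge a b iha ihb => exact (hclosed _ _ iha ihb).1
  | vee a b iha ihb => exact (hclosed _ _ iha ihb).2.1
  | diff a b iha ihb => exact (hclosed _ _ iha ihb).2.2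

theorem of_injective : Function.Injective (of : α → FreeSBA α) := by
  let _ := SBA.ofGeneralizedBooleanAlgebra (Set α)
  intro a b h
  simpa using congrArg (lift fun c => ({c} : Set α)) h

theorem freelyGenerates_range_of : FreelyGenerates (FreeSBA α) (Set.range of) := by
  refine ⟨generates_range_of, fun T _ g => ⟨lift fun a => g ⟨of a, a, rfl⟩, isHom_lift _, ?_⟩⟩
  rintro ⟨_, a, rfl⟩
  rfl

end FreeSBA

/-! ### The embedding -/

noncomputable def Finite.listOf {α : Type u} [Finite α] (p : α → Prop) : List α :=
  (Set.toFinite {a | p a}).toFinset.toList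

theorem Finite.mem_listOf {α : Type u} [Finite α] {p : α → Prop} {a : α} :
    a ∈ Finite.listOf p ↔ p a := by
  simp [Finite.listOf]

namespace SBA

variable {S : Type u} [SBA S] [Finite S]

open FreeSBA

noncomputable def classMinterm (r : S) : FreeSBA S :=
  meetList (of r) ((Finite.listOf (Drel · r)).map of) ∖
    joinList ((Finite.listOf fun a => ¬Drel a r).map of)

open Classical in
noncomputable def classMap (r b : S) : FreeSBA S :=
  if Drel b r then of (b ⋏ r) ⋏ classMinterm r ⋏ of (r ⋏ b) else zero

noncomputable def embedding (R : List S) (s : S) : FreeSBA S :=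
  joinList (R.map fun r => classMap r (proj r s))

theorem sandwich_classMinterm {a r : S} (ha : Drel a r) :
    classMinterm r ⋏ of a ⋏ classMinterm r = classMinterm r :=
  sandwich_eq_of_nle_of_sandwich_eq (nle_diff _ _)
    (sandwich_meetList_of_mem (List.mem_map.2 ⟨a, Finite.mem_listOf.2 ha, rfl⟩))

theorem classMinterm_wedge_of_not_drel {a r : S} (ha : ¬Drel a r) :
    classMinterm r ⋏ of a = zero :=
  wedge_eq_zero_of_wedge_joinList_eq_zero (diff_wedge_eq_zero _ _)
    (List.mem_map.2 ⟨a, Finite.mem_listOf.2 ha, rfl⟩)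

theorem classMap_wedge {r b b' : S} (hb : Drel b r) (hb' : Drel b' r) :
    classMap r (b ⋏ b') = classMap r b ⋏ classMap r b' := by
  have hbb' : Drel b b' := drel_trans hb (drel_symm hb')
  have hμ : classMinterm r ⋏ (of (r ⋏ b) ⋏ of (b' ⋏ r)) ⋏ classMinterm r = classMinterm r := by
    rw [← sandwich_wedge, sandwich_classMinterm (drel_wedge (drel_symm hb)),
      sandwich_classMinterm (drel_trans (drel_wedge hb') hb'), wedge_self]
  unfold classMap
  rw [if_pos hb, if_pos hb', if_pos (drel_trans (drel_wedge hbb') hb),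
    wedge_wedge_eq_of_drel hbb' hb', ← wedge_assoc, wedge_wedge_eq_of_drel (drel_symm hb) hbb']
  calc of (b ⋏ r) ⋏ classMinterm r ⋏ of (r ⋏ b')
      = of (b ⋏ r) ⋏ (classMinterm r ⋏ (of (r ⋏ b) ⋏ of (b' ⋏ r)) ⋏ classMinterm r) ⋏
          of (r ⋏ b') := by rw [hμ]
    _ = _ := by simp only [wedge_assoc]

theorem classMap_zero {r : S} (hr : r ≠ zero) : classMap r zero = zero :=
  if_neg fun h => hr (eq_zero_of_drel_zero h)

theorem classMap_wedge_classMap {r r' : S} (h : ¬Drel r r') (b b' : S) :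
    classMap r b ⋏ classMap r' b' = zero := by
  unfold classMap
  split_ifs with hb hb'
  · have hμ : classMinterm r ⋏ of (b' ⋏ r') = zero :=
      classMinterm_wedge_of_not_drel fun h' =>
        h (drel_symm (drel_trans (drel_symm (drel_trans (drel_wedge hb') hb')) h'))
    calc of (b ⋏ r) ⋏ classMinterm r ⋏ of (r ⋏ b) ⋏ (of (b' ⋏ r') ⋏ classMinterm r' ⋏ of (r' ⋏ b'))
        = of (b ⋏ r) ⋏ (classMinterm r ⋏ of (r ⋏ b) ⋏ of (b' ⋏ r')) ⋏
            (classMinterm r' ⋏ of (r' ⋏ b')) := by simp only [wedge_assoc]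
      _ = zero := by rw [wedge_wedge_eq_zero hμ, wedge_zero, zero_wedge]
  all_goals simp only [zero_wedge, wedge_zero]

theorem isHom_classMap_proj {r : S} (hr : IsAtom r) : IsHom fun s => classMap r (proj r s) :=
  (isHom_proj hr).comp_of_drel hr.proj_eq_zero_or_drel (classMap_zero hr.1)
    fun _ _ => classMap_wedge

theorem isHom_embedding {R : List S} (hR : IsAtomTransversal R) : IsHom (embedding R) :=
  isHom_joinList_map (fun r hr => isHom_classMap_proj (hR.isAtom r hr))
    (hR.nodup.pairwise_of_forall_ne fun r hr r' hr' hne _ _ =>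
      classMap_wedge_classMap (fun h => hne (hR.eq_of_drel r hr r' hr' h)) _ _)

open Classical in
noncomputable def restrictToClass (r a : S) : S := if Drel a r then a else zero

theorem lift_restrictToClass_classMinterm (r : S) :
    Drel (lift (restrictToClass r) (classMinterm r)) r := by
  have hmem : ∀ a ∈ Finite.listOf (Drel · r), restrictToClass r a = a := fun a ha =>
    if_pos (Finite.mem_listOf.1 ha)
  have hnot : ∀ a ∈ Finite.listOf (fun a : S => ¬Drel a r), restrictToClass r a = zero := by
    intro a ha
    rw [Finite.mem_listOf] at ha
    exact if_neg ha
  rw [classMinterm, (isHom_lift _).map_diff, (isHom_lift _).map_meetList,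
    (isHom_lift _).map_joinList, joinList_eq_zero_iff.2, diff_zero]
  · simp only [List.map_map, Function.comp_def, lift_of]
    rw [List.map_congr_left hmem, List.map_id', restrictToClass, if_pos (drel_refl r)]
    exact drel_meetList (drel_refl r) fun a ha => by rwa [Finite.mem_listOf] at ha
  · simp only [List.map_map, List.mem_map, Function.comp_apply, lift_of]
    rintro _ ⟨a, ha, rfl⟩
    exact hnot a ha

theorem lift_restrictToClass_classMinterm_of_not_drel {r r' : S} (h : ¬Drel r' r) :
    lift (restrictToClass r) (classMinterm r') = zero := by
  rw [classMinterm, (isHom_lift _).map_diff, (isHom_lift _).map_meetList, lift_of,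
    restrictToClass, if_neg h, zero_meetList, zero_diff]

theorem lift_restrictToClass_classMap_proj {r : S} (hr : IsAtom r) (s : S) :
    lift (restrictToClass r) (classMap r (proj r s)) = proj r s := by
  rcases hr.proj_eq_zero_or_drel s with hs | hs
  · rw [hs, classMap_zero hr.1, (isHom_lift _).map_zero]
  have hW := lift_restrictToClass_classMinterm r
  have hsr : Drel (proj r s ⋏ r) r := drel_trans (drel_wedge hs) hs
  have hrs : Drel (r ⋏ proj r s) r := drel_wedge (drel_symm hs)
  rw [classMap, if_pos hs, (isHom_lift _).map_wedge, (isHom_lift _).map_wedge, lift_of, lift_of,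
    restrictToClass, if_pos hsr, restrictToClass, if_pos hrs,
    wedge_wedge_eq_of_drel (drel_trans hsr (drel_symm hW)) (drel_trans hW (drel_symm hrs)),
    wedge_assoc, wedge_wedge_self, ← wedge_assoc, hs.1]

theorem lift_restrictToClass_classMap_of_not_drel {r r' : S} (h : ¬Drel r' r) (b : S) :
    lift (restrictToClass r) (classMap r' b) = zero := by
  unfold classMap
  split_ifs
  · rw [(isHom_lift _).map_wedge, (isHom_lift _).map_wedge,
      lift_restrictToClass_classMinterm_of_not_drel h, wedge_zero, zero_wedge]
  · exact (isHom_lift _).map_zero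

theorem lift_restrictToClass_embedding {R : List S} (hR : IsAtomTransversal R) {r : S}
    (hr : r ∈ R) (s : S) : lift (restrictToClass r) (embedding R s) = proj r s := by
  rw [embedding, (isHom_lift _).map_joinList, List.map_map]
  refine (joinList_map_eq_single hR.nodup hr fun r' hr' hne => ?_).trans
    (lift_restrictToClass_classMap_proj (hR.isAtom r hr) s)
  exact lift_restrictToClass_classMap_of_not_drel (fun h => hne (hR.eq_of_drel r' hr' r hr h)) _

theorem embedding_injective {R : List S} (hR : IsAtomTransversal R) :
    Function.Injective (embedding R) := by
  refine Function.LeftInverse.injective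
    (g := fun w => joinList (R.map fun r => lift (restrictToClass r) w)) fun s => ?_
  dsimp only
  rw [List.map_congr_left fun r hr => lift_restrictToClass_embedding hR hr s, hR.joinList_proj]

end SBA

theorem stmt12 (S : Type u) [SBA S] [Finite S] :
    ∃ (n : ℕ), 1 ≤ n ∧ ∃ (F : Type u) (instF : SBA F) (x : Fin n → F),
      Function.Injective x ∧
      @FreelyGenerates F instF (Set.range x) ∧
      ∃ f : S → F, @SBA.IsHom S _ F instF f ∧ Function.Injective f := by
  obtain ⟨R, hR⟩ := exists_isAtomTransversal (S := S)
  have : Nonempty S := ⟨zero⟩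
  let e : Fin (Nat.card S) ≃ S := (Finite.equivFin S).symm
  refine ⟨Nat.card S, Nat.card_pos, FreeSBA S, inferInstance, FreeSBA.of ∘ e,
    FreeSBA.of_injective.comp e.injective, ?_, embedding R, isHom_embedding hR,
    embedding_injective hR⟩
  rw [e.surjective.range_comp]
  exact FreeSBA.freelyGenerates_range_of
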